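/- Let J be the endomorphism of 𝔤₁ with J e₁ = e₂, J e₂ = −e₁, J e₃ = −e₆, J e₄ = e₅, J e₅ = −e₄, J e₆ = e₃, and let ω = w₁₂ e¹∧e² + w₁₃ e¹∧e³ − w₁₃ e²∧e⁶ + w₃₄ e³∧e⁴ + w₃₆ e³∧e⁶ + w₃₄ e⁵∧e⁶. Then ω(JX,JY) = ω(X,Y) for all X, Y ∈ 𝔤₁, and ω∧dω = 0. -/
import Mathlib


open Finset

noncomputable section

/-- The underlying vector space `ℝ⁶`. -/
abbrev V : Type := Fin 6 → ℝ

/-- The `i`-th standard basis vector `eᵢ` (0-indexed: `e 0 = e₁`, …, `e 5 = e₆`). -/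
def e (i : Fin 6) : V := Pi.single i 1

/-- The Lie bracket of the nilpotent Lie algebra 𝔤₁, with nonzero brackets
`[e₁,e₃]=e₄`, `[e₁,e₄]=e₆`, `[e₂,e₃]=e₅`, `[e₂,e₅]=e₆` (0-indexed below). -/
def bra (X Y : V) : V :=
  (X 0 * Y 2 - X 2 * Y 0) • e 3 + (X 1 * Y 2 - X 2 * Y 1) • e 4 +
    (X 0 * Y 3 - X 3 * Y 0 + X 1 * Y 4 - X 4 * Y 1) • e 5

/-- The Chevalley–Eilenberg differential of a 2-form:
`dω(X,Y,Z) = −ω([X,Y],Z) + ω([X,Z],Y) − ω([Y,Z],X)`. -/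
def dOm (ω : V → V → ℝ) (X Y Z : V) : ℝ :=
  -ω (bra X Y) Z + ω (bra X Z) Y - ω (bra Y Z) X

/-- The wedge product of a 2-form and a 3-form, as a 5-form:
`(ω∧τ)(X₁,…,X₅) = (1/(2!·3!)) Σ_{σ∈S₅} sgn(σ) ω(X_{σ1},X_{σ2}) τ(X_{σ3},X_{σ4},X_{σ5})`. -/
def wedge23 (ω : V → V → ℝ) (τ : V → V → V → ℝ) (Xs : Fin 5 → V) : ℝ :=
  (1 / 12 : ℝ) * ∑ σ : Equiv.Perm (Fin 5),
    ((Equiv.Perm.sign σ : ℤ) : ℝ) *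
      (ω (Xs (σ 0)) (Xs (σ 1)) * τ (Xs (σ 2)) (Xs (σ 3)) (Xs (σ 4)))

/-- The 2-form `ω = Σ_{i<j} w_{ij} e^i ∧ e^j` determined by the coefficients `w i j`
(only the entries with `i < j` are used). -/
def form2 (w : Fin 6 → Fin 6 → ℝ) (X Y : V) : ℝ :=
  ∑ i : Fin 6, ∑ j : Fin 6, if i < j then w i j * (X i * Y j - X j * Y i) else 0

/-- The complex structure `J` of Magnin on 𝔤₁ (with `ξ₃₆ = 1`):
`J e₁ = e₂`, `J e₂ = −e₁`, `J e₃ = −e₆`, `J e₄ = e₅`, `J e₅ = −e₄`, `J e₆ = e₃`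
(0-indexed below). -/
def Jc : V → V := fun X =>
  X 0 • e 1 - X 1 • e 0 - X 2 • e 5 + X 3 • e 4 - X 4 • e 3 + X 5 • e 2

/-- The 2-form `ω₄` of the fourth family of `J`-compatible semi-Kähler forms on 𝔤₁. -/
def omJ4 (w12 w13 w34 w36 : ℝ) : V → V → ℝ :=
  form2
    ![![0, w12, w13, 0, 0, 0],
      ![0, 0, 0, 0, 0, -w13],
      ![0, 0, 0, w34, 0, w36],
      ![0, 0, 0, 0, 0, 0],
      ![0, 0, 0, 0, 0, w34],
      ![0, 0, 0, 0, 0, 0]]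

set_option maxHeartbeats 4000000

lemma expand5 (F : Fin 5 → Fin 5 → Fin 5 → Fin 5 → Fin 5 → ℝ) :
    ∑ σ : Equiv.Perm (Fin 5), ((Equiv.Perm.sign σ : ℤ) : ℝ) * F (σ 0) (σ 1) (σ 2) (σ 3) (σ 4)
      =
F 0 1 2 3 4 - F 0 1 2 4 3 - F 0 1 3 2 4 + F 0 1 3 4 2 + F 0 1 4 2 3 - F 0 1 4 3 2 - F 0 2 1 3 4 + F 0 2 1 4 3 + F 0 2 3 1 4 - F 0 2 3 4 1 - F 0 2 4 1 3 + F 0 2 4 3 1 + F 0 3 1 2 4 - F 0 3 1 4 2 - F 0 3 2 1 4 + F 0 3 2 4 1 + F 0 3 4 1 2 - F 0 3 4 2 1 - F 0 4 1 2 3 + F 0 4 1 3 2 + F 0 4 2 1 3 - F 0 4 2 3 1 - F 0 4 3 1 2 + F 0 4 3 2 1 - F 1 0 2 3 4 + F 1 0 2 4 3 + F 1 0 3 2 4 - F 1 0 3 4 2 - F 1 0 4 2 3 + F 1 0 4 3 2 + F 1 2 0 3 4 - F 1 2 0 4 3 - F 1 2 3 0 4 + F 1 2 3 4 0 + F 1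 2 4 0 3 - F 1 2 4 3 0 - F 1 3 0 2 4 + F 1 3 0 4 2 + F 1 3 2 0 4 - F 1 3 2 4 0 - F 1 3 4 0 2 + F 1 3 4 2 0 + F 1 4 0 2 3 - F 1 4 0 3 2 - F 1 4 2 0 3 + F 1 4 2 3 0 + F 1 4 3 0 2 - F 1 4 3 2 0 + F 2 0 1 3 4 - F 2 0 1 4 3 - F 2 0 3 1 4 + F 2 0 3 4 1 + F 2 0 4 1 3 - F 2 0 4 3 1 - F 2 1 0 3 4 + F 2 1 0 4 3 + F 2 1 3 0 4 - F 2 1 3 4 0 - F 2 1 4 0 3 + F 2 1 4 3 0 + F 2 3 0 1 4 - F 2 3 0 4 1 - F 2 3 1 0 4 + F 2 3 1 4 0 + F 2 3 4 0 1 - F 2 3 4 1 0 - F 2 4 0 1 3 + F 2 4 0 3 1 + F 2 4 1 0 3 - F 2 4 1 3 0 - F 2 4 3 0 1 + F 2 4 3 1 0 - F 3 0 1 2 4 + F 3 0 1 4 2 + F 3 0 2 1 4 - F 3 0 2 4 1 - F 3 0 4 1 2 + F 3 0 4 2 1 + F 3 1 0 2 4 - F 3 1 0 4 2 - F 3 1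 2 0 4 + F 3 1 2 4 0 + F 3 1 4 0 2 - F 3 1 4 2 0 - F 3 2 0 1 4 + F 3 2 0 4 1 + F 3 2 1 0 4 - F 3 2 1 4 0 - F 3 2 4 0 1 + F 3 2 4 1 0 + F 3 4 0 1 2 - F 3 4 0 2 1 - F 3 4 1 0 2 + F 3 4 1 2 0 + F 3 4 2 0 1 - F 3 4 2 1 0 + F 4 0 1 2 3 - F 4 0 1 3 2 - F 4 0 2 1 3 + F 4 0 2 3 1 + F 4 0 3 1 2 - F 4 0 3 2 1 - F 4 1 0 2 3 + F 4 1 0 3 2 + F 4 1 2 0 3 - F 4 1 2 3 0 - F 4 1 3 0 2 + F 4 1 3 2 0 + F 4 2 0 1 3 - F 4 2 0 3 1 - F 4 2 1 0 3 + F 4 2 1 3 0 + F 4 2 3 0 1 - F 4 2 3 1 0 - F 4 3 0 1 2 + F 4 3 0 2 1 + F 4 3 1 0 2 - F 4 3 1 2 0 - F 4 3 2 0 1 + F 4 3 2 1 0 := by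
  rw [← Equiv.sum_comp Equiv.Perm.decomposeFin.symm, Fintype.sum_prod_type]
  conv_lhs => enter [2,a]; rw [← Equiv.sum_comp Equiv.Perm.decomposeFin.symm, Fintype.sum_prod_type]
  conv_lhs => enter [2,a,2,b]; rw [← Equiv.sum_comp Equiv.Perm.decomposeFin.symm, Fintype.sum_prod_type]
  conv_lhs => enter [2,a,2,b,2,c]; rw [← Equiv.sum_comp Equiv.Perm.decomposeFin.symm, Fintype.sum_prod_type]
  conv_lhs => enter [2,a,2,b,2,c,2,d]; rw [Fintype.sum_subsingleton _ 1]
  simp only [show (4:Fin 5) = Fin.succ 3 from rfl, show (3:Fin 5) = Fin.succ 2 from rfl,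
    show (2:Fin 5) = Fin.succ 1 from rfl, show (1:Fin 5) = Fin.succ 0 from rfl,
    show (3:Fin 4) = Fin.succ 2 from rfl, show (2:Fin 4) = Fin.succ 1 from rfl,
    show (1:Fin 4) = Fin.succ 0 from rfl,
    show (2:Fin 3) = Fin.succ 1 from rfl, show (1:Fin 3) = Fin.succ 0 from rfl,
    show (1:Fin 2) = Fin.succ 0 from rfl]
  simp only [Fin.sum_univ_five, Fin.sum_univ_four, Fin.sum_univ_three, Fin.sum_univ_two,
    Equiv.Perm.decomposeFin.symm_sign, Equiv.Perm.decomposeFin_symm_apply_zero,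
    Equiv.Perm.decomposeFin_symm_apply_succ, Equiv.Perm.sign_one,
    Equiv.Perm.one_apply, Equiv.swap_apply_def]
  simp (config := { decide := true }) only [Fin.succ_ne_zero, ite_true, ite_false, if_true, if_false]
  simp only [show Fin.succ (0:Fin 1) = 1 from rfl,
    show Fin.succ (0:Fin 2) = 1 from rfl, show Fin.succ (1:Fin 2) = 2 from rfl,
    show Fin.succ (0:Fin 3) = 1 from rfl, show Fin.succ (1:Fin 3) = 2 from rfl,
    show Fin.succ (2:Fin 3) = 3 from rfl,
    show Fin.succ (0:Fin 4) = 1 from rfl, show Fin.succ (1:Fin 4) = 2 from rfl,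
    show Fin.succ (2:Fin 4) = 3 from rfl, show Fin.succ (3:Fin 4) = 4 from rfl,
    Units.val_mul, Units.val_neg, Units.val_one, Int.cast_mul, Int.cast_neg, Int.cast_one]
  ring

lemma omJ4_eval (w12 w13 w34 w36 : ℝ) (X Y : V) :
    omJ4 w12 w13 w34 w36 X Y =
      w12 * (X 0 * Y 1 - X 1 * Y 0) + w13 * (X 0 * Y 2 - X 2 * Y 0)
        - w13 * (X 1 * Y 5 - X 5 * Y 1) + w34 * (X 2 * Y 3 - X 3 * Y 2)
        + w36 * (X 2 * Y 5 - X 5 * Y 2) + w34 * (X 4 * Y 5 - X 5 * Y 4) := by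
  simp [omJ4, form2, Fin.sum_univ_six]
  norm_num [show (![0, w12, w13, 0, 0, 0] : Fin 6 → ℝ) 5 = 0 from rfl,
    show (![0, 0, 0, 0, 0, -w13] : Fin 6 → ℝ) 5 = -w13 from rfl,
    show (![0, 0, 0, w34, 0, w36] : Fin 6 → ℝ) 5 = w36 from rfl,
    show (![(0:ℝ), 0, 0, 0, 0, 0] : Fin 6 → ℝ) 5 = 0 from rfl,
    show (![0, 0, 0, 0, 0, w34] : Fin 6 → ℝ) 5 = w34 from rfl]
  ring

lemma Jc0 (X : V) : Jc X 0 = -X 1 := by simp [Jc, e, Pi.single_apply]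
lemma Jc1 (X : V) : Jc X 1 = X 0 := by simp [Jc, e, Pi.single_apply]
lemma Jc2 (X : V) : Jc X 2 = X 5 := by simp [Jc, e, Pi.single_apply]
lemma Jc3 (X : V) : Jc X 3 = -X 4 := by simp [Jc, e, Pi.single_apply]
lemma Jc4 (X : V) : Jc X 4 = X 3 := by simp [Jc, e, Pi.single_apply]
lemma Jc5 (X : V) : Jc X 5 = -X 2 := by simp [Jc, e, Pi.single_apply]

lemma bra0 (X Y : V) : bra X Y 0 = 0 := by simp [bra, e, Pi.single_apply]
lemma bra1 (X Y : V) : bra X Y 1 = 0 := by simp [bra, e, Pi.single_apply]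
lemma bra2 (X Y : V) : bra X Y 2 = 0 := by simp [bra, e, Pi.single_apply]
lemma bra3 (X Y : V) : bra X Y 3 = X 0 * Y 2 - X 2 * Y 0 := by simp [bra, e, Pi.single_apply]
lemma bra4 (X Y : V) : bra X Y 4 = X 1 * Y 2 - X 2 * Y 1 := by simp [bra, e, Pi.single_apply]
lemma bra5 (X Y : V) : bra X Y 5 = X 0 * Y 3 - X 3 * Y 0 + X 1 * Y 4 - X 4 * Y 1 := by
  simp [bra, e, Pi.single_apply]

lemma W_swap (w12 w13 w34 w36 : ℝ) (X Y : V) :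
    omJ4 w12 w13 w34 w36 Y X = -omJ4 w12 w13 w34 w36 X Y := by
  simp only [omJ4_eval]; ring

lemma T_v1 (w12 w13 w34 w36 : ℝ) (X Y Z : V) :
    dOm (omJ4 w12 w13 w34 w36) Y X Z = -dOm (omJ4 w12 w13 w34 w36) X Y Z := by
  simp only [dOm, omJ4_eval, bra0, bra1, bra2, bra3, bra4, bra5]; ring

lemma T_v2 (w12 w13 w34 w36 : ℝ) (X Y Z : V) :
    dOm (omJ4 w12 w13 w34 w36) X Z Y = -dOm (omJ4 w12 w13 w34 w36) X Y Z := by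
  simp only [dOm, omJ4_eval, bra0, bra1, bra2, bra3, bra4, bra5]; ring

lemma T_v3 (w12 w13 w34 w36 : ℝ) (X Y Z : V) :
    dOm (omJ4 w12 w13 w34 w36) Z Y X = -dOm (omJ4 w12 w13 w34 w36) X Y Z := by
  simp only [dOm, omJ4_eval, bra0, bra1, bra2, bra3, bra4, bra5]; ring

lemma T_v4 (w12 w13 w34 w36 : ℝ) (X Y Z : V) :
    dOm (omJ4 w12 w13 w34 w36) Y Z X = dOm (omJ4 w12 w13 w34 w36) X Y Z := by
  simp only [dOm, omJ4_eval, bra0, bra1, bra2, bra3, bra4, bra5]; ring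

lemma T_v5 (w12 w13 w34 w36 : ℝ) (X Y Z : V) :
    dOm (omJ4 w12 w13 w34 w36) Z X Y = dOm (omJ4 w12 w13 w34 w36) X Y Z := by
  simp only [dOm, omJ4_eval, bra0, bra1, bra2, bra3, bra4, bra5]; ring

lemma hkey (w12 w13 w34 w36 : ℝ) (X0 X1 X2 X3 X4 : V) :
    omJ4 w12 w13 w34 w36 X0 X1 * dOm (omJ4 w12 w13 w34 w36) X2 X3 X4
    - omJ4 w12 w13 w34 w36 X0 X2 * dOm (omJ4 w12 w13 w34 w36) X1 X3 X4
    + omJ4 w12 w13 w34 w36 X0 X3 * dOm (omJ4 w12 w13 w34 w36) X1 X2 X4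
    - omJ4 w12 w13 w34 w36 X0 X4 * dOm (omJ4 w12 w13 w34 w36) X1 X2 X3
    + omJ4 w12 w13 w34 w36 X1 X2 * dOm (omJ4 w12 w13 w34 w36) X0 X3 X4
    - omJ4 w12 w13 w34 w36 X1 X3 * dOm (omJ4 w12 w13 w34 w36) X0 X2 X4
    + omJ4 w12 w13 w34 w36 X1 X4 * dOm (omJ4 w12 w13 w34 w36) X0 X2 X3
    + omJ4 w12 w13 w34 w36 X2 X3 * dOm (omJ4 w12 w13 w34 w36) X0 X1 X4
    - omJ4 w12 w13 w34 w36 X2 X4 * dOm (omJ4 w12 w13 w34 w36) X0 X1 X3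
    + omJ4 w12 w13 w34 w36 X3 X4 * dOm (omJ4 w12 w13 w34 w36) X0 X1 X2 = 0 := by
  simp only [dOm, omJ4_eval, bra0, bra1, bra2, bra3, bra4, bra5]
  ring

/-- the 2-form `ω₄` is compatible with `J` (`ω(JX,JY) = ω(X,Y)`)
and satisfies `ω∧dω = 0`. -/
theorem statement9 (w12 w13 w34 w36 : ℝ) :
    (∀ X Y : V, omJ4 w12 w13 w34 w36 (Jc X) (Jc Y) = omJ4 w12 w13 w34 w36 X Y) ∧
    (∀ Xs : Fin 5 → V,
      wedge23 (omJ4 w12 w13 w34 w36) (dOm (omJ4 w12 w13 w34 w36)) Xs = 0) := by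
  constructor
  · intro X Y
    simp only [omJ4_eval, Jc0, Jc1, Jc2, Jc3, Jc4, Jc5]
    ring
  · intro Xs
    have h120 := expand5 (fun a b c d e' =>
      omJ4 w12 w13 w34 w36 (Xs a) (Xs b) * dOm (omJ4 w12 w13 w34 w36) (Xs c) (Xs d) (Xs e'))
    have hW10 : omJ4 w12 w13 w34 w36 (Xs 1) (Xs 0) = -omJ4 w12 w13 w34 w36 (Xs 0) (Xs 1) := W_swap w12 w13 w34 w36 (Xs 0) (Xs 1)
    have hW20 : omJ4 w12 w13 w34 w36 (Xs 2) (Xs 0) = -omJ4 w12 w13 w34 w36 (Xs 0) (Xs 2) := W_swap w12 w13 w34 w36 (Xs 0) (Xs 2)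
    have hW30 : omJ4 w12 w13 w34 w36 (Xs 3) (Xs 0) = -omJ4 w12 w13 w34 w36 (Xs 0) (Xs 3) := W_swap w12 w13 w34 w36 (Xs 0) (Xs 3)
    have hW40 : omJ4 w12 w13 w34 w36 (Xs 4) (Xs 0) = -omJ4 w12 w13 w34 w36 (Xs 0) (Xs 4) := W_swap w12 w13 w34 w36 (Xs 0) (Xs 4)
    have hW21 : omJ4 w12 w13 w34 w36 (Xs 2) (Xs 1) = -omJ4 w12 w13 w34 w36 (Xs 1) (Xs 2) := W_swap w12 w13 w34 w36 (Xs 1) (Xs 2)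
    have hW31 : omJ4 w12 w13 w34 w36 (Xs 3) (Xs 1) = -omJ4 w12 w13 w34 w36 (Xs 1) (Xs 3) := W_swap w12 w13 w34 w36 (Xs 1) (Xs 3)
    have hW41 : omJ4 w12 w13 w34 w36 (Xs 4) (Xs 1) = -omJ4 w12 w13 w34 w36 (Xs 1) (Xs 4) := W_swap w12 w13 w34 w36 (Xs 1) (Xs 4)
    have hW32 : omJ4 w12 w13 w34 w36 (Xs 3) (Xs 2) = -omJ4 w12 w13 w34 w36 (Xs 2) (Xs 3) := W_swap w12 w13 w34 w36 (Xs 2) (Xs 3)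
    have hW42 : omJ4 w12 w13 w34 w36 (Xs 4) (Xs 2) = -omJ4 w12 w13 w34 w36 (Xs 2) (Xs 4) := W_swap w12 w13 w34 w36 (Xs 2) (Xs 4)
    have hW43 : omJ4 w12 w13 w34 w36 (Xs 4) (Xs 3) = -omJ4 w12 w13 w34 w36 (Xs 3) (Xs 4) := W_swap w12 w13 w34 w36 (Xs 3) (Xs 4)
    have hT102 : dOm (omJ4 w12 w13 w34 w36) (Xs 1) (Xs 0) (Xs 2) = -dOm (omJ4 w12 w13 w34 w36) (Xs 0) (Xs 1) (Xs 2) := T_v1 w12 w13 w34 w36 (Xs 0) (Xs 1) (Xs 2)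
    have hT021 : dOm (omJ4 w12 w13 w34 w36) (Xs 0) (Xs 2) (Xs 1) = -dOm (omJ4 w12 w13 w34 w36) (Xs 0) (Xs 1) (Xs 2) := T_v2 w12 w13 w34 w36 (Xs 0) (Xs 1) (Xs 2)
    have hT210 : dOm (omJ4 w12 w13 w34 w36) (Xs 2) (Xs 1) (Xs 0) = -dOm (omJ4 w12 w13 w34 w36) (Xs 0) (Xs 1) (Xs 2) := T_v3 w12 w13 w34 w36 (Xs 0) (Xs 1) (Xs 2)
    have hT120 : dOm (omJ4 w12 w13 w34 w36) (Xs 1) (Xs 2) (Xs 0) = dOm (omJ4 w12 w13 w34 w36) (Xs 0) (Xs 1) (Xs 2) := T_v4 w12 w13 w34 w36 (Xs 0) (Xs 1) (Xs 2)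
    have hT201 : dOm (omJ4 w12 w13 w34 w36) (Xs 2) (Xs 0) (Xs 1) = dOm (omJ4 w12 w13 w34 w36) (Xs 0) (Xs 1) (Xs 2) := T_v5 w12 w13 w34 w36 (Xs 0) (Xs 1) (Xs 2)
    have hT103 : dOm (omJ4 w12 w13 w34 w36) (Xs 1) (Xs 0) (Xs 3) = -dOm (omJ4 w12 w13 w34 w36) (Xs 0) (Xs 1) (Xs 3) := T_v1 w12 w13 w34 w36 (Xs 0) (Xs 1) (Xs 3)
    have hT031 : dOm (omJ4 w12 w13 w34 w36) (Xs 0) (Xs 3) (Xs 1) = -dOm (omJ4 w12 w13 w34 w36) (Xs 0) (Xs 1) (Xs 3) := T_v2 w12 w13 w34 w36 (Xs 0) (Xs 1) (Xs 3)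
    have hT310 : dOm (omJ4 w12 w13 w34 w36) (Xs 3) (Xs 1) (Xs 0) = -dOm (omJ4 w12 w13 w34 w36) (Xs 0) (Xs 1) (Xs 3) := T_v3 w12 w13 w34 w36 (Xs 0) (Xs 1) (Xs 3)
    have hT130 : dOm (omJ4 w12 w13 w34 w36) (Xs 1) (Xs 3) (Xs 0) = dOm (omJ4 w12 w13 w34 w36) (Xs 0) (Xs 1) (Xs 3) := T_v4 w12 w13 w34 w36 (Xs 0) (Xs 1) (Xs 3)
    have hT301 : dOm (omJ4 w12 w13 w34 w36) (Xs 3) (Xs 0) (Xs 1) = dOm (omJ4 w12 w13 w34 w36) (Xs 0) (Xs 1) (Xs 3) := T_v5 w12 w13 w34 w36 (Xs 0) (Xs 1) (Xs 3)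
    have hT104 : dOm (omJ4 w12 w13 w34 w36) (Xs 1) (Xs 0) (Xs 4) = -dOm (omJ4 w12 w13 w34 w36) (Xs 0) (Xs 1) (Xs 4) := T_v1 w12 w13 w34 w36 (Xs 0) (Xs 1) (Xs 4)
    have hT041 : dOm (omJ4 w12 w13 w34 w36) (Xs 0) (Xs 4) (Xs 1) = -dOm (omJ4 w12 w13 w34 w36) (Xs 0) (Xs 1) (Xs 4) := T_v2 w12 w13 w34 w36 (Xs 0) (Xs 1) (Xs 4)
    have hT410 : dOm (omJ4 w12 w13 w34 w36) (Xs 4) (Xs 1) (Xs 0) = -dOm (omJ4 w12 w13 w34 w36) (Xs 0) (Xs 1) (Xs 4) := T_v3 w12 w13 w34 w36 (Xs 0) (Xs 1) (Xs 4)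
    have hT140 : dOm (omJ4 w12 w13 w34 w36) (Xs 1) (Xs 4) (Xs 0) = dOm (omJ4 w12 w13 w34 w36) (Xs 0) (Xs 1) (Xs 4) := T_v4 w12 w13 w34 w36 (Xs 0) (Xs 1) (Xs 4)
    have hT401 : dOm (omJ4 w12 w13 w34 w36) (Xs 4) (Xs 0) (Xs 1) = dOm (omJ4 w12 w13 w34 w36) (Xs 0) (Xs 1) (Xs 4) := T_v5 w12 w13 w34 w36 (Xs 0) (Xs 1) (Xs 4)
    have hT203 : dOm (omJ4 w12 w13 w34 w36) (Xs 2) (Xs 0) (Xs 3) = -dOm (omJ4 w12 w13 w34 w36) (Xs 0) (Xs 2) (Xs 3) := T_v1 w12 w13 w34 w36 (Xs 0) (Xs 2) (Xs 3)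
    have hT032 : dOm (omJ4 w12 w13 w34 w36) (Xs 0) (Xs 3) (Xs 2) = -dOm (omJ4 w12 w13 w34 w36) (Xs 0) (Xs 2) (Xs 3) := T_v2 w12 w13 w34 w36 (Xs 0) (Xs 2) (Xs 3)
    have hT320 : dOm (omJ4 w12 w13 w34 w36) (Xs 3) (Xs 2) (Xs 0) = -dOm (omJ4 w12 w13 w34 w36) (Xs 0) (Xs 2) (Xs 3) := T_v3 w12 w13 w34 w36 (Xs 0) (Xs 2) (Xs 3)
    have hT230 : dOm (omJ4 w12 w13 w34 w36) (Xs 2) (Xs 3) (Xs 0) = dOm (omJ4 w12 w13 w34 w36) (Xs 0) (Xs 2) (Xs 3) := T_v4 w12 w13 w34 w36 (Xs 0) (Xs 2) (Xs 3)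
    have hT302 : dOm (omJ4 w12 w13 w34 w36) (Xs 3) (Xs 0) (Xs 2) = dOm (omJ4 w12 w13 w34 w36) (Xs 0) (Xs 2) (Xs 3) := T_v5 w12 w13 w34 w36 (Xs 0) (Xs 2) (Xs 3)
    have hT204 : dOm (omJ4 w12 w13 w34 w36) (Xs 2) (Xs 0) (Xs 4) = -dOm (omJ4 w12 w13 w34 w36) (Xs 0) (Xs 2) (Xs 4) := T_v1 w12 w13 w34 w36 (Xs 0) (Xs 2) (Xs 4)
    have hT042 : dOm (omJ4 w12 w13 w34 w36) (Xs 0) (Xs 4) (Xs 2) = -dOm (omJ4 w12 w13 w34 w36) (Xs 0) (Xs 2) (Xs 4) := T_v2 w12 w13 w34 w36 (Xs 0) (Xs 2) (Xs 4)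
    have hT420 : dOm (omJ4 w12 w13 w34 w36) (Xs 4) (Xs 2) (Xs 0) = -dOm (omJ4 w12 w13 w34 w36) (Xs 0) (Xs 2) (Xs 4) := T_v3 w12 w13 w34 w36 (Xs 0) (Xs 2) (Xs 4)
    have hT240 : dOm (omJ4 w12 w13 w34 w36) (Xs 2) (Xs 4) (Xs 0) = dOm (omJ4 w12 w13 w34 w36) (Xs 0) (Xs 2) (Xs 4) := T_v4 w12 w13 w34 w36 (Xs 0) (Xs 2) (Xs 4)
    have hT402 : dOm (omJ4 w12 w13 w34 w36) (Xs 4) (Xs 0) (Xs 2) = dOm (omJ4 w12 w13 w34 w36) (Xs 0) (Xs 2) (Xs 4) := T_v5 w12 w13 w34 w36 (Xs 0) (Xs 2) (Xs 4)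
    have hT304 : dOm (omJ4 w12 w13 w34 w36) (Xs 3) (Xs 0) (Xs 4) = -dOm (omJ4 w12 w13 w34 w36) (Xs 0) (Xs 3) (Xs 4) := T_v1 w12 w13 w34 w36 (Xs 0) (Xs 3) (Xs 4)
    have hT043 : dOm (omJ4 w12 w13 w34 w36) (Xs 0) (Xs 4) (Xs 3) = -dOm (omJ4 w12 w13 w34 w36) (Xs 0) (Xs 3) (Xs 4) := T_v2 w12 w13 w34 w36 (Xs 0) (Xs 3) (Xs 4)
    have hT430 : dOm (omJ4 w12 w13 w34 w36) (Xs 4) (Xs 3) (Xs 0) = -dOm (omJ4 w12 w13 w34 w36) (Xs 0) (Xs 3) (Xs 4) := T_v3 w12 w13 w34 w36 (Xs 0) (Xs 3) (Xs 4)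
    have hT340 : dOm (omJ4 w12 w13 w34 w36) (Xs 3) (Xs 4) (Xs 0) = dOm (omJ4 w12 w13 w34 w36) (Xs 0) (Xs 3) (Xs 4) := T_v4 w12 w13 w34 w36 (Xs 0) (Xs 3) (Xs 4)
    have hT403 : dOm (omJ4 w12 w13 w34 w36) (Xs 4) (Xs 0) (Xs 3) = dOm (omJ4 w12 w13 w34 w36) (Xs 0) (Xs 3) (Xs 4) := T_v5 w12 w13 w34 w36 (Xs 0) (Xs 3) (Xs 4)
    have hT213 : dOm (omJ4 w12 w13 w34 w36) (Xs 2) (Xs 1) (Xs 3) = -dOm (omJ4 w12 w13 w34 w36) (Xs 1) (Xs 2) (Xs 3) := T_v1 w12 w13 w34 w36 (Xs 1) (Xs 2) (Xs 3)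
    have hT132 : dOm (omJ4 w12 w13 w34 w36) (Xs 1) (Xs 3) (Xs 2) = -dOm (omJ4 w12 w13 w34 w36) (Xs 1) (Xs 2) (Xs 3) := T_v2 w12 w13 w34 w36 (Xs 1) (Xs 2) (Xs 3)
    have hT321 : dOm (omJ4 w12 w13 w34 w36) (Xs 3) (Xs 2) (Xs 1) = -dOm (omJ4 w12 w13 w34 w36) (Xs 1) (Xs 2) (Xs 3) := T_v3 w12 w13 w34 w36 (Xs 1) (Xs 2) (Xs 3)
    have hT231 : dOm (omJ4 w12 w13 w34 w36) (Xs 2) (Xs 3) (Xs 1) = dOm (omJ4 w12 w13 w34 w36) (Xs 1) (Xs 2) (Xs 3) := T_v4 w12 w13 w34 w36 (Xs 1) (Xs 2) (Xs 3)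
    have hT312 : dOm (omJ4 w12 w13 w34 w36) (Xs 3) (Xs 1) (Xs 2) = dOm (omJ4 w12 w13 w34 w36) (Xs 1) (Xs 2) (Xs 3) := T_v5 w12 w13 w34 w36 (Xs 1) (Xs 2) (Xs 3)
    have hT214 : dOm (omJ4 w12 w13 w34 w36) (Xs 2) (Xs 1) (Xs 4) = -dOm (omJ4 w12 w13 w34 w36) (Xs 1) (Xs 2) (Xs 4) := T_v1 w12 w13 w34 w36 (Xs 1) (Xs 2) (Xs 4)
    have hT142 : dOm (omJ4 w12 w13 w34 w36) (Xs 1) (Xs 4) (Xs 2) = -dOm (omJ4 w12 w13 w34 w36) (Xs 1) (Xs 2) (Xs 4) := T_v2 w12 w13 w34 w36 (Xs 1) (Xs 2) (Xs 4)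
    have hT421 : dOm (omJ4 w12 w13 w34 w36) (Xs 4) (Xs 2) (Xs 1) = -dOm (omJ4 w12 w13 w34 w36) (Xs 1) (Xs 2) (Xs 4) := T_v3 w12 w13 w34 w36 (Xs 1) (Xs 2) (Xs 4)
    have hT241 : dOm (omJ4 w12 w13 w34 w36) (Xs 2) (Xs 4) (Xs 1) = dOm (omJ4 w12 w13 w34 w36) (Xs 1) (Xs 2) (Xs 4) := T_v4 w12 w13 w34 w36 (Xs 1) (Xs 2) (Xs 4)
    have hT412 : dOm (omJ4 w12 w13 w34 w36) (Xs 4) (Xs 1) (Xs 2) = dOm (omJ4 w12 w13 w34 w36) (Xs 1) (Xs 2) (Xs 4) := T_v5 w12 w13 w34 w36 (Xs 1) (Xs 2) (Xs 4)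
    have hT314 : dOm (omJ4 w12 w13 w34 w36) (Xs 3) (Xs 1) (Xs 4) = -dOm (omJ4 w12 w13 w34 w36) (Xs 1) (Xs 3) (Xs 4) := T_v1 w12 w13 w34 w36 (Xs 1) (Xs 3) (Xs 4)
    have hT143 : dOm (omJ4 w12 w13 w34 w36) (Xs 1) (Xs 4) (Xs 3) = -dOm (omJ4 w12 w13 w34 w36) (Xs 1) (Xs 3) (Xs 4) := T_v2 w12 w13 w34 w36 (Xs 1) (Xs 3) (Xs 4)
    have hT431 : dOm (omJ4 w12 w13 w34 w36) (Xs 4) (Xs 3) (Xs 1) = -dOm (omJ4 w12 w13 w34 w36) (Xs 1) (Xs 3) (Xs 4) := T_v3 w12 w13 w34 w36 (Xs 1) (Xs 3) (Xs 4)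
    have hT341 : dOm (omJ4 w12 w13 w34 w36) (Xs 3) (Xs 4) (Xs 1) = dOm (omJ4 w12 w13 w34 w36) (Xs 1) (Xs 3) (Xs 4) := T_v4 w12 w13 w34 w36 (Xs 1) (Xs 3) (Xs 4)
    have hT413 : dOm (omJ4 w12 w13 w34 w36) (Xs 4) (Xs 1) (Xs 3) = dOm (omJ4 w12 w13 w34 w36) (Xs 1) (Xs 3) (Xs 4) := T_v5 w12 w13 w34 w36 (Xs 1) (Xs 3) (Xs 4)
    have hT324 : dOm (omJ4 w12 w13 w34 w36) (Xs 3) (Xs 2) (Xs 4) = -dOm (omJ4 w12 w13 w34 w36) (Xs 2) (Xs 3) (Xs 4) := T_v1 w12 w13 w34 w36 (Xs 2) (Xs 3) (Xs 4)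
    have hT243 : dOm (omJ4 w12 w13 w34 w36) (Xs 2) (Xs 4) (Xs 3) = -dOm (omJ4 w12 w13 w34 w36) (Xs 2) (Xs 3) (Xs 4) := T_v2 w12 w13 w34 w36 (Xs 2) (Xs 3) (Xs 4)
    have hT432 : dOm (omJ4 w12 w13 w34 w36) (Xs 4) (Xs 3) (Xs 2) = -dOm (omJ4 w12 w13 w34 w36) (Xs 2) (Xs 3) (Xs 4) := T_v3 w12 w13 w34 w36 (Xs 2) (Xs 3) (Xs 4)
    have hT342 : dOm (omJ4 w12 w13 w34 w36) (Xs 3) (Xs 4) (Xs 2) = dOm (omJ4 w12 w13 w34 w36) (Xs 2) (Xs 3) (Xs 4) := T_v4 w12 w13 w34 w36 (Xs 2) (Xs 3) (Xs 4)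
    have hT423 : dOm (omJ4 w12 w13 w34 w36) (Xs 4) (Xs 2) (Xs 3) = dOm (omJ4 w12 w13 w34 w36) (Xs 2) (Xs 3) (Xs 4) := T_v5 w12 w13 w34 w36 (Xs 2) (Xs 3) (Xs 4)
    simp only [wedge23, h120, hW10, hW20, hW30, hW40, hW21, hW31, hW41, hW32, hW42, hW43, hT102, hT021, hT210, hT120, hT201, hT103, hT031, hT310, hT130, hT301, hT104, hT041, hT410, hT140, hT401, hT203, hT032, hT320, hT230, hT302, hT204, hT042, hT420, hT240, hT402, hT304, hT043, hT430, hT340, hT403, hT213, hT132, hT321, hT231, hT312, hT214, hT142, hT421, hT241, hT412, hT314, hT143, hT431, hT341, hT413, hT324, hT243, hT432, hT342, hT423]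
    linear_combination hkey w12 w13 w34 w36 (Xs 0) (Xs 1) (Xs 2) (Xs 3) (Xs 4)
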